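/- Let G be a finite simple cubic graph that is uniquely 3-edge colorable. Then every graph in the family G^Y, i.e., every graph obtained from G by finitely many Y-joins with further copies of G, is uniquely 3-edge colorable. -/

import Mathlib

open Sum

section Helpers

lemma even_card_of_invol {α : Type} [DecidableEq α] (s : Finset α) (g : α → α)
    (hmem : ∀ a ∈ s, g a ∈ s) (hinv : ∀ a ∈ s, g (g a) = a) (hne : ∀ a ∈ s, g a ≠ a) :
    Even s.card := by
  induction s using Finset.strongInduction with
  | _ s ih =>
    rcases s.eq_empty_or_nonempty with rfl | ⟨a, ha⟩
    · simp
    · have hga := hmem a ha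
      have hgane : a ≠ g a := Ne.symm (hne a ha)
      have h1 : a ∈ s.erase (g a) := Finset.mem_erase.2 ⟨hgane, ha⟩
      set t := (s.erase (g a)).erase a with ht
      have hts : t ⊂ s := by
        refine Finset.ssubset_iff_of_subset ?_ |>.2 ⟨a, ha, ?_⟩
        · exact (Finset.erase_subset _ _).trans (Finset.erase_subset _ _)
        · simp [ht]
      have htmem : ∀ b ∈ t, b ∈ s ∧ b ≠ a ∧ b ≠ g a := by
        intro b hb
        simp only [ht, Finset.mem_erase] at hb
        exact ⟨hb.2.2, hb.1, hb.2.1⟩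
      have hmem' : ∀ b ∈ t, g b ∈ t := by
        intro b hb
        obtain ⟨hbs, hba, hbga⟩ := htmem b hb
        have hgb : g b ∈ s := hmem b hbs
        simp only [ht, Finset.mem_erase]
        refine ⟨?_, ?_, hgb⟩
        · intro h; exact hbga (by rw [← hinv b hbs, h])
        · intro h; exact hba (by rw [← hinv b hbs, h, hinv a ha])
      have hinv' : ∀ b ∈ t, g (g b) = b := fun b hb => hinv b (htmem b hb).1
      have hne' : ∀ b ∈ t, g b ≠ b := fun b hb => hne b (htmem b hb).1
      have hcard : s.card = t.card + 2 := by
        have c1 := Finset.card_erase_add_one hga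
        have c2 : t.card + 1 = (s.erase (g a)).card := Finset.card_erase_add_one h1
        omega
      obtain ⟨k, hk⟩ := ih t hts hmem' hinv' hne'
      exact ⟨k + 1, by omega⟩

lemma inj_iff_surj_ncard3 {X : Type} (s : Set X) (hs : s.ncard = 3) (φ : s → Fin 3) :
    Function.Injective φ ↔ Function.Surjective φ := by
  have hfin : s.Finite := Set.finite_of_ncard_ne_zero (by omega)
  haveI := hfin.fintype
  have hcard : Fintype.card s = 3 := by
    rw [← Nat.card_eq_fintype_card, Nat.card_coe_set_eq, hs]
  constructor
  · intro h
    exact ((Fintype.bijective_iff_injective_and_card φ).2 ⟨h, by simp [hcard]⟩).2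
  · intro h
    exact ((Fintype.bijective_iff_surjective_and_card φ).2 ⟨h, by simp [hcard]⟩).1

/-- a generic "extension" of an edge coloring to all of `Sym2`. -/
noncomputable def ext3 {X : Type} (Γ : SimpleGraph X) (c : Γ.edgeSet → Fin 3) (s : Sym2 X) :
    Fin 3 := by
  classical exact if h : s ∈ Γ.edgeSet then c ⟨s, h⟩ else 0

lemma ext3_eq {X : Type} (Γ : SimpleGraph X) (c : Γ.edgeSet → Fin 3) {s : Sym2 X}
    (h : s ∈ Γ.edgeSet) : ext3 Γ c s = c ⟨s, h⟩ := by
  simp [ext3, h]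

end Helpers



/-- A cubic graph: every vertex has exactly 3 neighbors (3-regular). -/
def IsCubic {V : Type} (G : SimpleGraph V) : Prop := ∀ v : V, (G.neighborSet v).ncard = 3

/-- A proper 3-edge coloring: a function from the edge set to 3 colors such that
distinct edges sharing a vertex receive different colors. -/
def IsProper3EdgeColoring {V : Type} (G : SimpleGraph V) (c : G.edgeSet → Fin 3) : Prop :=
  ∀ e₁ e₂ : G.edgeSet, e₁ ≠ e₂ →
    (∃ v : V, v ∈ (e₁ : Sym2 V) ∧ v ∈ (e₂ : Sym2 V)) → c e₁ ≠ c e₂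

/-- Uniquely 3-edge colorable: a proper 3-edge coloring exists, and any two proper
3-edge colorings induce the same partition of the edge set into color classes. -/
def Uniquely3EdgeColorable {V : Type} (G : SimpleGraph V) : Prop :=
  (∃ c : G.edgeSet → Fin 3, IsProper3EdgeColoring G c) ∧
  ∀ c₁ c₂ : G.edgeSet → Fin 3, IsProper3EdgeColoring G c₁ → IsProper3EdgeColoring G c₂ →
    ∀ e e' : G.edgeSet, (c₁ e = c₁ e' ↔ c₂ e = c₂ e')

/-- The Y-join of two cubic graphs `G₁`, `G₂` with respect to vertices `v₁`, `v₂` and a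
bijection `f` between their neighborhoods: delete `v₁` and `v₂` and join each neighbor
`u` of `v₁` to `f u` by a matching edge. -/
def YJoin {V₁ V₂ : Type} (G₁ : SimpleGraph V₁) (G₂ : SimpleGraph V₂) (v₁ : V₁) (v₂ : V₂)
    (f : G₁.neighborSet v₁ ≃ G₂.neighborSet v₂) :
    SimpleGraph ({x : V₁ // x ≠ v₁} ⊕ {y : V₂ // y ≠ v₂}) where
  Adj p q :=
    match p, q with
    | Sum.inl a, Sum.inl b => G₁.Adj a.1 b.1
    | Sum.inr a, Sum.inr b => G₂.Adj a.1 b.1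
    | Sum.inl a, Sum.inr b => ∃ h : a.1 ∈ G₁.neighborSet v₁, (f ⟨a.1, h⟩ : V₂) = b.1
    | Sum.inr b, Sum.inl a => ∃ h : a.1 ∈ G₁.neighborSet v₁, (f ⟨a.1, h⟩ : V₂) = b.1
  symm := by
    refine ⟨?_⟩
    rintro (a | a) (b | b) h
    · exact G₁.adj_symm h
    · exact h
    · exact h
    · exact G₂.adj_symm h
  loopless := by
    refine ⟨?_⟩
    rintro (a | a) h
    · exact G₁.irrefl h
    · exact G₂.irrefl h

/-- The family `G^Y`: the smallest class of graphs containing `G` and closed under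
taking the Y-join of a member with a fresh copy of `G` (for any admissible choice of
vertices and neighborhood bijection). -/
inductive YFamily {V : Type} (G : SimpleGraph V) : (W : Type) → SimpleGraph W → Prop
  | base : YFamily G V G
  | join {W : Type} (H : SimpleGraph W) (hH : YFamily G W H) (w : W) (v : V)
      (f : H.neighborSet w ≃ G.neighborSet v) :
      YFamily G ({x : W // x ≠ w} ⊕ {y : V // y ≠ v}) (YJoin H G w v f)

/-- at a vertex of degree `3`, a proper coloring realizes every color on the incident
edges, exactly once. -/
lemma exists_unique_nbr_color {X : Type} (Γ : SimpleGraph X) (c : Γ.edgeSet → Fin 3)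
    (hc : IsProper3EdgeColoring Γ c) (z : X) (hz : (Γ.neighborSet z).ncard = 3) (k : Fin 3) :
    ∃ y : Γ.neighborSet z, c ⟨s(z, y.1), Γ.mem_edgeSet.2 y.2⟩ = k ∧
      ∀ y' : Γ.neighborSet z, c ⟨s(z, y'.1), Γ.mem_edgeSet.2 y'.2⟩ = k → y' = y := by
  set φ : Γ.neighborSet z → Fin 3 := fun y => c ⟨s(z, y.1), Γ.mem_edgeSet.2 y.2⟩ with hφ
  have hinj : Function.Injective φ := by
    intro y₁ y₂ h
    by_contra hne
    refine hc _ _ (fun hh => hne ?_) ⟨z, by simp, by simp⟩ h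
    have h2 : s(z, y₁.1) = s(z, y₂.1) := Subtype.ext_iff.1 hh
    exact Subtype.ext (Sym2.congr_right.1 h2)
  obtain ⟨y, hy⟩ := (inj_iff_surj_ncard3 _ hz φ).1 hinj k
  exact ⟨y, hy, fun y' hy' => hinj (hy'.trans hy.symm)⟩



section YJoinLemmas

variable {W V : Type} (H : SimpleGraph W) (G : SimpleGraph V) (w : W) (v : V)
  (f : H.neighborSet w ≃ G.neighborSet v)

lemma yjoin_adj_ll {a b : {x : W // x ≠ w}} :
    (YJoin H G w v f).Adj (inl a) (inl b) ↔ H.Adj a.1 b.1 := Iff.rfl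

lemma yjoin_adj_rr {a b : {y : V // y ≠ v}} :
    (YJoin H G w v f).Adj (inr a) (inr b) ↔ G.Adj a.1 b.1 := Iff.rfl

lemma yjoin_adj_lr {a : {x : W // x ≠ w}} {b : {y : V // y ≠ v}} :
    (YJoin H G w v f).Adj (inl a) (inr b) ↔
      ∃ h : a.1 ∈ H.neighborSet w, (f ⟨a.1, h⟩ : V) = b.1 := Iff.rfl

lemma yjoin_adj_rl {a : {x : W // x ≠ w}} {b : {y : V // y ≠ v}} :
    (YJoin H G w v f).Adj (inr b) (inl a) ↔
      ∃ h : a.1 ∈ H.neighborSet w, (f ⟨a.1, h⟩ : V) = b.1 := Iff.rfl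

/-- the matching edge attached at a neighbor `u` of `w`. -/
def mEdge (u : W) (hu : u ∈ H.neighborSet w) : (YJoin H G w v f).edgeSet :=
  ⟨s(inl ⟨u, by intro h; subst h; exact H.irrefl hu⟩,
    inr ⟨(f ⟨u, hu⟩ : V), by
      intro h; have h2 := (f ⟨u, hu⟩).2; rw [h] at h2; exact G.irrefl h2⟩),
   (YJoin H G w v f).mem_edgeSet.2 ⟨hu, rfl⟩⟩

/-- degree-3 property of the Y-join, left vertices. -/
lemma yjoin_ncard_left (hH : IsCubic H) (a : {x : W // x ≠ w}) :
    ((YJoin H G w v f).neighborSet (inl a)).ncard = 3 := by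
  classical
  set φ : W → ({x : W // x ≠ w} ⊕ {y : V // y ≠ v}) := fun z =>
    if hz : z = w then
      (if ha : a.1 ∈ H.neighborSet w then
        inr ⟨(f ⟨a.1, ha⟩ : V), by
          intro h; have h2 := (f ⟨a.1, ha⟩).2; rw [h] at h2; exact G.irrefl h2⟩
      else inl a)
    else inl ⟨z, hz⟩ with hphi
  have key : (YJoin H G w v f).neighborSet (inl a) = φ '' (H.neighborSet a.1) := by
    ext q
    constructor
    · rintro hq
      rcases q with b | b
      · refine ⟨b.1, hq, ?_⟩
        simp only [hphi, dif_neg b.2]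
      · obtain ⟨h, hf⟩ := hq
        have hw : w ∈ H.neighborSet a.1 := H.adj_symm h
        refine ⟨w, hw, ?_⟩
        simp only [hphi, dif_pos rfl, dif_pos h]
        exact congrArg inr (Subtype.ext hf)
    · rintro ⟨z, hz, rfl⟩
      by_cases hzw : z = w
      · rw [hzw] at hz ⊢
        have ha : a.1 ∈ H.neighborSet w := H.adj_symm hz
        simp only [hphi, dif_pos rfl, dif_pos ha]
        exact (yjoin_adj_lr H G w v f).2 ⟨ha, rfl⟩
      · simp only [hphi, dif_neg hzw]
        exact hz
  have hinj : Set.InjOn φ (H.neighborSet a.1) := by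
    intro z₁ hz₁ z₂ hz₂ heq
    by_cases h1 : z₁ = w <;> by_cases h2 : z₂ = w
    · rw [h1, h2]
    · exfalso
      rw [h1] at heq hz₁
      have ha : a.1 ∈ H.neighborSet w := H.adj_symm hz₁
      simp only [hphi, dif_pos rfl, dif_pos ha, dif_neg h2] at heq
      cases heq
    · exfalso
      rw [h2] at heq hz₂
      have ha : a.1 ∈ H.neighborSet w := H.adj_symm hz₂
      simp only [hphi, dif_pos rfl, dif_pos ha, dif_neg h1] at heq
      cases heq
    · simp only [hphi, dif_neg h1, dif_neg h2, inl.injEq, Subtype.mk.injEq] at heq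
      exact heq
  rw [key, Set.ncard_image_of_injOn hinj, hH a.1]

/-- degree-3 property of the Y-join, right vertices. -/
lemma yjoin_ncard_right (hG : IsCubic G) (b : {y : V // y ≠ v}) :
    ((YJoin H G w v f).neighborSet (inr b)).ncard = 3 := by
  classical
  set φ : V → ({x : W // x ≠ w} ⊕ {y : V // y ≠ v}) := fun z =>
    if hz : z = v then
      (if hb : b.1 ∈ G.neighborSet v then
        inl ⟨(f.symm ⟨b.1, hb⟩ : W), by
          intro h; have h2 := (f.symm ⟨b.1, hb⟩).2; rw [h] at h2; exact H.irrefl h2⟩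
      else inr b)
    else inr ⟨z, hz⟩ with hphi
  have key : (YJoin H G w v f).neighborSet (inr b) = φ '' (G.neighborSet b.1) := by
    ext q
    constructor
    · rintro hq
      rcases q with a | d
      · obtain ⟨h, hf⟩ := hq
        have hb : b.1 ∈ G.neighborSet v := by rw [← hf]; exact (f ⟨a.1, h⟩).2
        refine ⟨v, ?_, ?_⟩
        · have : G.Adj v b.1 := by rw [← hf]; exact (f ⟨a.1, h⟩).2
          exact G.adj_symm this
        · simp only [hphi, dif_pos rfl, dif_pos hb]
          refine congrArg inl (Subtype.ext ?_)
          have : f.symm ⟨b.1, hb⟩ = ⟨a.1, h⟩ := by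
            rw [Equiv.symm_apply_eq]
            exact (Subtype.ext hf.symm)
          rw [this]
      · refine ⟨d.1, hq, ?_⟩
        simp only [hphi, dif_neg d.2]
    · rintro ⟨z, hz, rfl⟩
      by_cases hzv : z = v
      · rw [hzv] at hz ⊢
        have hb : b.1 ∈ G.neighborSet v := G.adj_symm hz
        simp only [hphi, dif_pos rfl, dif_pos hb]
        refine (yjoin_adj_rl H G w v f).2 ⟨(f.symm ⟨b.1, hb⟩).2, ?_⟩
        have : (⟨(f.symm ⟨b.1, hb⟩ : W), (f.symm ⟨b.1, hb⟩).2⟩ : H.neighborSet w)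
            = f.symm ⟨b.1, hb⟩ := rfl
        rw [this, Equiv.apply_symm_apply]
      · simp only [hphi, dif_neg hzv]
        exact hz
  have hinj : Set.InjOn φ (G.neighborSet b.1) := by
    intro z₁ hz₁ z₂ hz₂ heq
    by_cases h1 : z₁ = v <;> by_cases h2 : z₂ = v
    · rw [h1, h2]
    · exfalso
      rw [h1] at heq hz₁
      have hb : b.1 ∈ G.neighborSet v := G.adj_symm hz₁
      simp only [hphi, dif_pos rfl, dif_pos hb, dif_neg h2] at heq
      cases heq
    · exfalso
      rw [h2] at heq hz₂
      have hb : b.1 ∈ G.neighborSet v := G.adj_symm hz₂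
      simp only [hphi, dif_pos rfl, dif_pos hb, dif_neg h1] at heq
      cases heq
    · simp only [hphi, dif_neg h1, dif_neg h2, inr.injEq, Subtype.mk.injEq] at heq
      exact heq
  rw [key, Set.ncard_image_of_injOn hinj, hG b.1]

lemma yjoin_isCubic (hH : IsCubic H) (hG : IsCubic G) :
    IsCubic (YJoin H G w v f) := by
  rintro (a | b)
  · exact yjoin_ncard_left H G w v f hH a
  · exact yjoin_ncard_right H G w v f hG b

/-- The parity argument: every color appears on some matching edge. -/
lemma matching_surj [Fintype V] (hH : IsCubic H) (hG : IsCubic G)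
    (c : (YJoin H G w v f).edgeSet → Fin 3)
    (hc : IsProper3EdgeColoring (YJoin H G w v f) c) (k : Fin 3) :
    ∃ (u : W) (hu : u ∈ H.neighborSet w), c (mEdge H G w v f u hu) = k := by
  classical
  have hex : ∀ b : {y : V // y ≠ v},
      ∃ y : (YJoin H G w v f).neighborSet (inr b), c ⟨s(inr b, y.1), (YJoin H G w v f).mem_edgeSet.2 y.2⟩ = k ∧
        ∀ y' : (YJoin H G w v f).neighborSet (inr b), c ⟨s(inr b, y'.1), (YJoin H G w v f).mem_edgeSet.2 y'.2⟩ = k → y' = y :=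
    fun b => exists_unique_nbr_color (YJoin H G w v f) c hc (inr b) (yjoin_ncard_right H G w v f hG b) k
  choose F hFk hFu using hex
  set g : {y : V // y ≠ v} → {y : V // y ≠ v} :=
    fun b => Sum.elim (fun _ => b) (fun b' => b') (F b).1 with hg
  have hFne : ∀ b, (F b).1 ≠ inr b := by
    intro b h
    have h2 := (F b).2
    rw [SimpleGraph.mem_neighborSet, h] at h2
    exact (YJoin H G w v f).irrefl h2
  have hB : ∀ b b', (F b).1 = inr b' → (F b').1 = inr b := by
    intro b b' h
    have hadj : (YJoin H G w v f).Adj (inr b') (inr b) := by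
      have h2 := (F b).2
      rw [SimpleGraph.mem_neighborSet, h] at h2
      exact (YJoin H G w v f).adj_symm h2
    have hcol : c ⟨s(inr b', inr b), (YJoin H G w v f).mem_edgeSet.2 hadj⟩ = k := by
      have h1 : (⟨s(inr b', inr b), (YJoin H G w v f).mem_edgeSet.2 hadj⟩ : (YJoin H G w v f).edgeSet)
          = ⟨s(inr b, (F b).1), (YJoin H G w v f).mem_edgeSet.2 (F b).2⟩ := by
        apply Subtype.ext
        show s(inr b', inr b) = s(inr b, (F b).1)
        rw [h]
        exact Sym2.eq_swap
      rw [h1]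
      exact hFk b
    have h3 := hFu b' ⟨inr b, hadj⟩ hcol
    rw [← h3]
  set s : Finset {y : V // y ≠ v} := Finset.univ.filter (fun b => g b ≠ b) with hs
  have hgb : ∀ b b', (F b).1 = inr b' → g b = b' := by
    intro b b' h; rw [hg]; simp [h]
  have hmoved : ∀ b : {y : V // y ≠ v}, g b ≠ b → ∃ b', (F b).1 = inr b' := by
    intro b hb
    rcases hFF : (F b).1 with a | b'
    · exfalso; apply hb; rw [hg]; simp [hFF]
    · exact ⟨b', rfl⟩
  have hinv : ∀ b ∈ s, g (g b) = b := by
    intro b hb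
    have hb' := (Finset.mem_filter.1 hb).2
    obtain ⟨b', hFF⟩ := hmoved b hb'
    rw [hgb b b' hFF]
    exact hgb b' b (hB b b' hFF)
  have hmem : ∀ b ∈ s, g b ∈ s := by
    intro b hb
    have hb' := (Finset.mem_filter.1 hb).2
    refine Finset.mem_filter.2 ⟨Finset.mem_univ _, ?_⟩
    intro h
    exact hb' (((hinv b hb).symm.trans h).symm)
  have heven : Even s.card :=
    even_card_of_invol s g hmem hinv (fun b hb => (Finset.mem_filter.1 hb).2)
  have hVeven : Even (Fintype.card V) := by
    haveI : DecidableRel G.Adj := Classical.decRel _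
    have hdeg : ∀ x : V, G.degree x = 3 := by
      intro x
      have h3 := hG x
      rw [← Nat.card_coe_set_eq, Nat.card_eq_fintype_card,
        SimpleGraph.card_neighborSet_eq_degree] at h3
      exact h3
    have hsum := G.sum_degrees_eq_twice_card_edges
    rw [Finset.sum_congr rfl (fun x _ => hdeg x), Finset.sum_const, Finset.card_univ,
      smul_eq_mul] at hsum
    have h4 : Even (Fintype.card V * 3) := hsum ▸ even_two_mul _
    rcases Nat.even_mul.1 h4 with h | h
    · exact h
    · exact absurd h (by decide)
  have hodd : Odd (Fintype.card {y : V // y ≠ v}) := by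
    have hcard' : Fintype.card {y : V // y ≠ v} = Fintype.card V - 1 := by
      simp [Fintype.card_subtype_compl, Fintype.card_subtype_eq]
    rw [hcard']
    refine Nat.Even.sub_odd ?_ hVeven odd_one
    exact Fintype.card_pos_iff.2 ⟨v⟩
  have hfix : ∃ b : {y : V // y ≠ v}, g b = b := by
    by_contra hnone
    push_neg at hnone
    have huniv : s = Finset.univ := by
      ext b; simp [hs, hnone b]
    rw [huniv, Finset.card_univ] at heven
    exact (Nat.not_even_iff_odd.2 hodd) heven
  obtain ⟨b, hfb⟩ := hfix
  rcases hFa : (F b).1 with a | b'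
  · have hadj : (YJoin H G w v f).Adj (inr b) (inl a) := by
      have h2 := (F b).2
      rw [SimpleGraph.mem_neighborSet, hFa] at h2
      exact h2
    obtain ⟨h, hf⟩ := hadj
    refine ⟨a.1, h, ?_⟩
    have hedge : mEdge H G w v f a.1 h = ⟨s(inr b, (F b).1), (YJoin H G w v f).mem_edgeSet.2 (F b).2⟩ := by
      apply Subtype.ext
      show (mEdge H G w v f a.1 h).1 = s(inr b, (F b).1)
      rw [hFa]
      exact Sym2.eq_iff.2 (Or.inr ⟨congrArg inl (Subtype.ext rfl), congrArg inr (Subtype.ext hf)⟩)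
    rw [hedge]
    exact hFk b
  · exact absurd (hFa.trans (congrArg inr ((hgb b b' hFa).symm.trans hfb))) (hFne b)

lemma matching_inj [Fintype V] (hH : IsCubic H) (hG : IsCubic G)
    (c : (YJoin H G w v f).edgeSet → Fin 3)
    (hc : IsProper3EdgeColoring (YJoin H G w v f) c) {u₁ u₂ : W}
    (hu₁ : u₁ ∈ H.neighborSet w) (hu₂ : u₂ ∈ H.neighborSet w)
    (h : c (mEdge H G w v f u₁ hu₁) = c (mEdge H G w v f u₂ hu₂)) : u₁ = u₂ := by
  set φ : H.neighborSet w → Fin 3 := fun u => c (mEdge H G w v f u.1 u.2) with hφ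
  have hsurj : Function.Surjective φ := by
    intro k
    obtain ⟨u, hu, hk⟩ := matching_surj H G w v f hH hG c hc k
    exact ⟨⟨u, hu⟩, hk⟩
  have hinj := (inj_iff_surj_ncard3 _ (hH w) φ).2 hsurj
  have := hinj (a₁ := ⟨u₁, hu₁⟩) (a₂ := ⟨u₂, hu₂⟩) h
  exact congrArg Subtype.val this

open Classical in
noncomputable def mcolor (c : (YJoin H G w v f).edgeSet → Fin 3) (u : W) : Fin 3 :=
  if hu : u ∈ H.neighborSet w then c (mEdge H G w v f u hu) else 0

open Classical in
noncomputable def pairH (c : (YJoin H G w v f).edgeSet → Fin 3) (x y : W) : Fin 3 :=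
  if hx : x = w then mcolor H G w v f c y
  else if hy : y = w then mcolor H G w v f c x
  else ext3 (YJoin H G w v f) c s(inl ⟨x, hx⟩, inl ⟨y, hy⟩)

lemma pairH_comm (c : (YJoin H G w v f).edgeSet → Fin 3) (x y : W) :
    pairH H G w v f c x y = pairH H G w v f c y x := by
  by_cases hx : x = w <;> by_cases hy : y = w
  · simp [pairH, hx, hy]
  · simp [pairH, hx, hy]
  · simp [pairH, hx, hy]
  · simp only [pairH, dif_neg hx, dif_neg hy]
    rw [Sym2.eq_swap]

/-- the coloring induced on `H` by a coloring of the Y-join. -/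
noncomputable def cHfun (c : (YJoin H G w v f).edgeSet → Fin 3) : H.edgeSet → Fin 3 :=
  fun e => Sym2.lift ⟨pairH H G w v f c, pairH_comm H G w v f c⟩ e.1

lemma cHfun_eval_nn (c : (YJoin H G w v f).edgeSet → Fin 3) {x y : W}
    (hx : x ≠ w) (hy : y ≠ w) (he : s(x, y) ∈ H.edgeSet)
    (he' : s(inl ⟨x, hx⟩, inl ⟨y, hy⟩) ∈ (YJoin H G w v f).edgeSet) :
    cHfun H G w v f c ⟨s(x, y), he⟩ = c ⟨s(inl ⟨x, hx⟩, inl ⟨y, hy⟩), he'⟩ := by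
  simp only [cHfun, Sym2.lift_mk, pairH, dif_neg hx, dif_neg hy]
  exact ext3_eq _ _ he'

lemma cHfun_eval_w (c : (YJoin H G w v f).edgeSet → Fin 3) {u : W}
    (hu : u ∈ H.neighborSet w) (he : s(w, u) ∈ H.edgeSet) :
    cHfun H G w v f c ⟨s(w, u), he⟩ = c (mEdge H G w v f u hu) := by
  simp only [cHfun, Sym2.lift_mk, pairH, dif_pos rfl, mcolor, dif_pos hu]

lemma cHfun_eval_w' (c : (YJoin H G w v f).edgeSet → Fin 3) {u : W}
    (hu : u ∈ H.neighborSet w) (he : s(u, w) ∈ H.edgeSet) :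
    cHfun H G w v f c ⟨s(u, w), he⟩ = c (mEdge H G w v f u hu) := by
  have hu' : u ≠ w := fun h => by
    rw [h] at hu; exact H.irrefl hu
  simp only [cHfun, Sym2.lift_mk, pairH, dif_neg hu', dif_pos rfl, mcolor, dif_pos hu]

/-- the induced coloring on `H` is proper, given injectivity of matching colors. -/
lemma cHfun_proper (c : (YJoin H G w v f).edgeSet → Fin 3)
    (hc : IsProper3EdgeColoring (YJoin H G w v f) c)
    (hminj : ∀ (u₁ u₂ : W) (hu₁ : u₁ ∈ H.neighborSet w) (hu₂ : u₂ ∈ H.neighborSet w),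
      c (mEdge H G w v f u₁ hu₁) = c (mEdge H G w v f u₂ hu₂) → u₁ = u₂) :
    IsProper3EdgeColoring H (cHfun H G w v f c) := by
  rintro e₁ e₂ hne ⟨z, hz₁, hz₂⟩
  obtain ⟨y₁, hy₁⟩ := Sym2.mem_iff_exists.1 hz₁
  obtain ⟨y₂, hy₂⟩ := Sym2.mem_iff_exists.1 hz₂
  have adj₁ : H.Adj z y₁ := H.mem_edgeSet.1 (hy₁ ▸ e₁.2)
  have adj₂ : H.Adj z y₂ := H.mem_edgeSet.1 (hy₂ ▸ e₂.2)
  have hyne : y₁ ≠ y₂ := by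
    intro h
    apply hne
    apply Subtype.ext
    rw [hy₁, hy₂, h]
  by_cases hzw : z = w
  · have hu₁ : y₁ ∈ H.neighborSet w := by rw [← hzw]; exact adj₁
    have hu₂ : y₂ ∈ H.neighborSet w := by rw [← hzw]; exact adj₂
    have hb₁ : (e₁ : Sym2 W) = s(w, y₁) := by rw [hy₁, hzw]
    have hb₂ : (e₂ : Sym2 W) = s(w, y₂) := by rw [hy₂, hzw]
    have he₁ : e₁ = ⟨s(w, y₁), hb₁ ▸ e₁.2⟩ := Subtype.ext hb₁
    have he₂ : e₂ = ⟨s(w, y₂), hb₂ ▸ e₂.2⟩ := Subtype.ext hb₂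
    rw [he₁, he₂, cHfun_eval_w H G w v f c hu₁, cHfun_eval_w H G w v f c hu₂]
    intro h
    exact hyne (hminj _ _ hu₁ hu₂ h)
  · by_cases h1 : y₁ = w
    · have hu : z ∈ H.neighborSet w := H.adj_symm (by rw [← h1]; exact adj₁)
      have h2 : y₂ ≠ w := fun hh => hyne (h1.trans hh.symm)
      have hb₁ : (e₁ : Sym2 W) = s(z, w) := by rw [hy₁, h1]
      have he₁ : e₁ = ⟨s(z, w), hb₁ ▸ e₁.2⟩ := Subtype.ext hb₁
      have he₂ : e₂ = ⟨s(z, y₂), hy₂ ▸ e₂.2⟩ := Subtype.ext hy₂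
      have hadj₂ : (YJoin H G w v f).Adj (inl ⟨z, hzw⟩) (inl ⟨y₂, h2⟩) := adj₂
      rw [he₁, he₂, cHfun_eval_w' H G w v f c hu,
        cHfun_eval_nn H G w v f c hzw h2 _ ((YJoin H G w v f).mem_edgeSet.2 hadj₂)]
      apply hc
      · intro hh
        have h3 := Subtype.ext_iff.1 hh
        rcases Sym2.eq_iff.1 h3 with ⟨_, h4⟩ | ⟨_, h4⟩ <;> cases h4
      · exact ⟨inl ⟨z, hzw⟩, Sym2.mem_mk_left _ _, Sym2.mem_mk_left _ _⟩
    · by_cases h2 : y₂ = w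
      · have hu : z ∈ H.neighborSet w := H.adj_symm (by rw [← h2]; exact adj₂)
        have hb₂ : (e₂ : Sym2 W) = s(z, w) := by rw [hy₂, h2]
        have he₂ : e₂ = ⟨s(z, w), hb₂ ▸ e₂.2⟩ := Subtype.ext hb₂
        have he₁ : e₁ = ⟨s(z, y₁), hy₁ ▸ e₁.2⟩ := Subtype.ext hy₁
        have hadj₁ : (YJoin H G w v f).Adj (inl ⟨z, hzw⟩) (inl ⟨y₁, h1⟩) := adj₁
        rw [he₁, he₂, cHfun_eval_w' H G w v f c hu,
          cHfun_eval_nn H G w v f c hzw h1 _ ((YJoin H G w v f).mem_edgeSet.2 hadj₁)]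
        apply hc
        · intro hh
          have h3 := Subtype.ext_iff.1 hh
          rcases Sym2.eq_iff.1 h3 with ⟨_, h4⟩ | ⟨h4, _⟩ <;> cases h4
        · exact ⟨inl ⟨z, hzw⟩, Sym2.mem_mk_left _ _, Sym2.mem_mk_left _ _⟩
      · have he₁ : e₁ = ⟨s(z, y₁), hy₁ ▸ e₁.2⟩ := Subtype.ext hy₁
        have he₂ : e₂ = ⟨s(z, y₂), hy₂ ▸ e₂.2⟩ := Subtype.ext hy₂
        have hadj₁ : (YJoin H G w v f).Adj (inl ⟨z, hzw⟩) (inl ⟨y₁, h1⟩) := adj₁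
        have hadj₂ : (YJoin H G w v f).Adj (inl ⟨z, hzw⟩) (inl ⟨y₂, h2⟩) := adj₂
        rw [he₁, he₂, cHfun_eval_nn H G w v f c hzw h1 _ ((YJoin H G w v f).mem_edgeSet.2 hadj₁),
          cHfun_eval_nn H G w v f c hzw h2 _ ((YJoin H G w v f).mem_edgeSet.2 hadj₂)]
        apply hc
        · intro h
          apply hyne
          have h3 := Subtype.ext_iff.1 h
          have h4 := Sym2.congr_right.1 h3
          exact congrArg Subtype.val (inl_injective h4)
        · exact ⟨inl ⟨z, hzw⟩, Sym2.mem_mk_left _ _, Sym2.mem_mk_left _ _⟩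

/-- the Y-join is symmetric in its two factors. -/
def swapIso : (YJoin H G w v f) ≃g (YJoin G H v w f.symm) where
  toEquiv := Equiv.sumComm _ _
  map_rel_iff' := @fun p q => by
    rcases p with a | a <;> rcases q with b | b
    · exact Iff.rfl
    · constructor
      · rintro ⟨h, hf⟩
        have h2 : a.1 ∈ H.neighborSet w := by rw [← hf]; exact (f.symm ⟨b.1, h⟩).2
        refine ⟨h2, ?_⟩
        have h3 : (⟨a.1, h2⟩ : H.neighborSet w) = f.symm ⟨b.1, h⟩ := Subtype.ext hf.symm
        rw [h3, Equiv.apply_symm_apply]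
      · rintro ⟨h, hf⟩
        have h2 : b.1 ∈ G.neighborSet v := by rw [← hf]; exact (f ⟨a.1, h⟩).2
        refine ⟨h2, ?_⟩
        have h3 : (⟨b.1, h2⟩ : G.neighborSet v) = f ⟨a.1, h⟩ := Subtype.ext hf.symm
        rw [h3, Equiv.symm_apply_apply]
    · constructor
      · rintro ⟨h, hf⟩
        have h2 : b.1 ∈ H.neighborSet w := by rw [← hf]; exact (f.symm ⟨a.1, h⟩).2
        refine ⟨h2, ?_⟩
        have h3 : (⟨b.1, h2⟩ : H.neighborSet w) = f.symm ⟨a.1, h⟩ := Subtype.ext hf.symm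
        rw [h3, Equiv.apply_symm_apply]
      · rintro ⟨h, hf⟩
        have h2 : a.1 ∈ G.neighborSet v := by rw [← hf]; exact (f ⟨b.1, h⟩).2
        refine ⟨h2, ?_⟩
        have h3 : (⟨a.1, h2⟩ : G.neighborSet v) = f ⟨b.1, h⟩ := Subtype.ext hf.symm
        rw [h3, Equiv.symm_apply_apply]
    · exact Iff.rfl

/-- transfer a coloring of the Y-join to the swapped Y-join. -/
noncomputable def swapColoring (c : (YJoin H G w v f).edgeSet → Fin 3) :
    (YJoin G H v w f.symm).edgeSet → Fin 3 :=
  fun e => c ((swapIso H G w v f).symm.mapEdgeSet e)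

lemma swapColoring_proper (c : (YJoin H G w v f).edgeSet → Fin 3)
    (hc : IsProper3EdgeColoring (YJoin H G w v f) c) :
    IsProper3EdgeColoring (YJoin G H v w f.symm) (swapColoring H G w v f c) := by
  rintro e₁ e₂ hne ⟨z, hz₁, hz₂⟩
  apply hc
  · intro h
    exact hne ((swapIso H G w v f).symm.mapEdgeSet.injective h)
  · refine ⟨(swapIso H G w v f).symm z, ?_, ?_⟩
    · exact Sym2.mem_map.2 ⟨z, hz₁, rfl⟩
    · exact Sym2.mem_map.2 ⟨z, hz₂, rfl⟩

lemma swapColoring_mEdge (c : (YJoin H G w v f).edgeSet → Fin 3)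
    (u' : V) (hu' : u' ∈ G.neighborSet v) :
    swapColoring H G w v f c (mEdge G H v w f.symm u' hu')
      = c (mEdge H G w v f (f.symm ⟨u', hu'⟩).1 (f.symm ⟨u', hu'⟩).2) := by
  apply congrArg c
  apply Subtype.ext
  show Sym2.map _ (mEdge G H v w f.symm u' hu').1 = (mEdge H G w v f _ _).1
  simp only [mEdge]
  rw [Sym2.map_pair_eq, Sym2.eq_swap]
  apply Sym2.eq_iff.2
  left
  constructor
  · show inl _ = inl _
    apply congrArg inl
    apply Subtype.ext
    rfl
  · show inr _ = inr _
    apply congrArg inr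
    apply Subtype.ext
    show u' = (f (f.symm ⟨u', hu'⟩) : V)
    rw [Equiv.apply_symm_apply]

/-- the induced coloring on `G`. -/
noncomputable def cGfun (c : (YJoin H G w v f).edgeSet → Fin 3) : G.edgeSet → Fin 3 :=
  cHfun G H v w f.symm (swapColoring H G w v f c)

lemma matching_inj_swap [Fintype V] (hH : IsCubic H) (hG : IsCubic G)
    (c : (YJoin H G w v f).edgeSet → Fin 3)
    (hc : IsProper3EdgeColoring (YJoin H G w v f) c) (u₁ u₂ : V)
    (hu₁ : u₁ ∈ G.neighborSet v) (hu₂ : u₂ ∈ G.neighborSet v)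
    (h : swapColoring H G w v f c (mEdge G H v w f.symm u₁ hu₁)
      = swapColoring H G w v f c (mEdge G H v w f.symm u₂ hu₂)) : u₁ = u₂ := by
  rw [swapColoring_mEdge, swapColoring_mEdge] at h
  have h2 := matching_inj H G w v f hH hG c hc (f.symm ⟨u₁, hu₁⟩).2 (f.symm ⟨u₂, hu₂⟩).2 h
  have h3 : f.symm ⟨u₁, hu₁⟩ = f.symm ⟨u₂, hu₂⟩ := Subtype.ext h2
  exact congrArg Subtype.val (f.symm.injective h3)

lemma cGfun_proper [Fintype V] (hH : IsCubic H) (hG : IsCubic G)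
    (c : (YJoin H G w v f).edgeSet → Fin 3)
    (hc : IsProper3EdgeColoring (YJoin H G w v f) c) :
    IsProper3EdgeColoring G (cGfun H G w v f c) :=
  cHfun_proper G H v w f.symm (swapColoring H G w v f c)
    (swapColoring_proper H G w v f c hc)
    (fun u₁ u₂ hu₁ hu₂ h => matching_inj_swap H G w v f hH hG c hc u₁ u₂ hu₁ hu₂ h)

lemma exists_Hedge : ∀ (es : Sym2 ({x : W // x ≠ w} ⊕ {y : V // y ≠ v}))
    (hes : es ∈ (YJoin H G w v f).edgeSet)
    (_ : ∃ a : {x : W // x ≠ w}, inl a ∈ es),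
    ∃ eh : H.edgeSet, ∀ c : (YJoin H G w v f).edgeSet → Fin 3,
      cHfun H G w v f c eh = c ⟨es, hes⟩ := by
  intro es
  induction es using Sym2.ind with
  | _ p q =>
    intro hes hL
    rcases p with a | b <;> rcases q with a' | b'
    · refine ⟨⟨s(a.1, a'.1), H.mem_edgeSet.2 hes⟩, fun c => ?_⟩
      exact cHfun_eval_nn H G w v f c a.2 a'.2 _ hes
    · obtain ⟨h, hf⟩ := (YJoin H G w v f).mem_edgeSet.1 hes
      refine ⟨⟨s(w, a.1), H.mem_edgeSet.2 h⟩, fun c => ?_⟩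
      rw [cHfun_eval_w H G w v f c h]
      apply congrArg c
      apply Subtype.ext
      exact Sym2.eq_iff.2 (Or.inl ⟨congrArg inl (Subtype.ext rfl), congrArg inr (Subtype.ext hf)⟩)
    · obtain ⟨h, hf⟩ := (YJoin H G w v f).mem_edgeSet.1 hes
      refine ⟨⟨s(w, a'.1), H.mem_edgeSet.2 h⟩, fun c => ?_⟩
      rw [cHfun_eval_w H G w v f c h]
      apply congrArg c
      apply Subtype.ext
      exact Sym2.eq_iff.2 (Or.inr ⟨congrArg inl (Subtype.ext rfl), congrArg inr (Subtype.ext hf)⟩)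
    · exfalso
      obtain ⟨a, ha⟩ := hL
      rw [Sym2.mem_iff] at ha
      rcases ha with h | h <;> exact Sum.inl_ne_inr h

lemma exists_Gedge (es : Sym2 ({x : W // x ≠ w} ⊕ {y : V // y ≠ v}))
    (hes : es ∈ (YJoin H G w v f).edgeSet)
    (hR : ∃ b : {y : V // y ≠ v}, inr b ∈ es) :
    ∃ eg : G.edgeSet, ∀ c : (YJoin H G w v f).edgeSet → Fin 3,
      cGfun H G w v f c eg = c ⟨es, hes⟩ := by
  set e' := (swapIso H G w v f).mapEdgeSet (⟨es, hes⟩ : (YJoin H G w v f).edgeSet) with he'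
  have hL' : ∃ b : {y : V // y ≠ v}, inl b ∈ e'.1 := by
    obtain ⟨b, hb⟩ := hR
    exact ⟨b, Sym2.mem_map.2 ⟨inr b, hb, rfl⟩⟩
  obtain ⟨eg, heg⟩ := exists_Hedge G H v w f.symm e'.1 e'.2 hL'
  refine ⟨eg, fun c => ?_⟩
  have h1 := heg (swapColoring H G w v f c)
  have h2 : (⟨e'.1, e'.2⟩ : (YJoin G H v w f.symm).edgeSet) = e' := rfl
  rw [h2] at h1
  have h3 : swapColoring H G w v f c e' = c ⟨es, hes⟩ := by
    show c ((swapIso H G w v f).symm.mapEdgeSet ((swapIso H G w v f).mapEdgeSet ⟨es, hes⟩)) = _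
    exact congrArg c ((swapIso H G w v f).mapEdgeSet.symm_apply_apply ⟨es, hes⟩)
  exact h1.trans h3

lemma yjoin_unique [Fintype V] (hH : IsCubic H) (hG : IsCubic G)
    (hHu : Uniquely3EdgeColorable H) (hGu : Uniquely3EdgeColorable G)
    (c₁ c₂ : (YJoin H G w v f).edgeSet → Fin 3)
    (hc₁ : IsProper3EdgeColoring (YJoin H G w v f) c₁)
    (hc₂ : IsProper3EdgeColoring (YJoin H G w v f) c₂)
    (e e' : (YJoin H G w v f).edgeSet) (h : c₁ e = c₁ e') : c₂ e = c₂ e' := by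
  have p1H := cHfun_proper H G w v f c₁ hc₁
    (fun u₁ u₂ hu₁ hu₂ hh => matching_inj H G w v f hH hG c₁ hc₁ hu₁ hu₂ hh)
  have p2H := cHfun_proper H G w v f c₂ hc₂
    (fun u₁ u₂ hu₁ hu₂ hh => matching_inj H G w v f hH hG c₂ hc₂ hu₁ hu₂ hh)
  have p1G := cGfun_proper H G w v f hH hG c₁ hc₁
  have p2G := cGfun_proper H G w v f hH hG c₂ hc₂
  have keyH : ∀ (ea eb : (YJoin H G w v f).edgeSet),
      (∃ a : {x : W // x ≠ w}, inl a ∈ ea.1) → (∃ a : {x : W // x ≠ w}, inl a ∈ eb.1) →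
      c₁ ea = c₁ eb → c₂ ea = c₂ eb := by
    intro ea eb hLa hLb h12
    obtain ⟨eha, hha⟩ := exists_Hedge H G w v f ea.1 ea.2 hLa
    obtain ⟨ehb, hhb⟩ := exists_Hedge H G w v f eb.1 eb.2 hLb
    have h1 : cHfun H G w v f c₁ eha = cHfun H G w v f c₁ ehb := by
      rw [hha c₁, hhb c₁]; exact h12
    have h2 := (hHu.2 (cHfun H G w v f c₁) (cHfun H G w v f c₂) p1H p2H eha ehb).1 h1
    rw [hha c₂, hhb c₂] at h2
    exact h2
  have keyG : ∀ (ea eb : (YJoin H G w v f).edgeSet),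
      (∃ b : {y : V // y ≠ v}, inr b ∈ ea.1) → (∃ b : {y : V // y ≠ v}, inr b ∈ eb.1) →
      c₁ ea = c₁ eb → c₂ ea = c₂ eb := by
    intro ea eb hRa hRb h12
    obtain ⟨ega, hga⟩ := exists_Gedge H G w v f ea.1 ea.2 hRa
    obtain ⟨egb, hgb⟩ := exists_Gedge H G w v f eb.1 eb.2 hRb
    have h1 : cGfun H G w v f c₁ ega = cGfun H G w v f c₁ egb := by
      rw [hga c₁, hgb c₁]; exact h12
    have h2 := (hGu.2 (cGfun H G w v f c₁) (cGfun H G w v f c₂) p1G p2G ega egb).1 h1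
    rw [hga c₂, hgb c₂] at h2
    exact h2
  have hclass : ∀ es : Sym2 ({x : W // x ≠ w} ⊕ {y : V // y ≠ v}),
      (∃ a : {x : W // x ≠ w}, inl a ∈ es) ∨ (∃ b : {y : V // y ≠ v}, inr b ∈ es) := by
    intro es
    induction es using Sym2.ind with
    | _ p q =>
      rcases p with a | b
      · exact Or.inl ⟨a, Sym2.mem_mk_left _ _⟩
      · exact Or.inr ⟨b, Sym2.mem_mk_left _ _⟩
  rcases hclass e.1 with hL | hR <;> rcases hclass e'.1 with hL' | hR'
  · exact keyH e e' hL hL' h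
  · obtain ⟨u, hu, hkm⟩ := matching_surj H G w v f hH hG c₁ hc₁ (c₁ e)
    have hmL : ∃ a : {x : W // x ≠ w}, inl a ∈ (mEdge H G w v f u hu).1 :=
      ⟨_, Sym2.mem_mk_left _ _⟩
    have hmR : ∃ b : {y : V // y ≠ v}, inr b ∈ (mEdge H G w v f u hu).1 :=
      ⟨_, Sym2.mem_mk_right _ _⟩
    have hem : c₂ e = c₂ (mEdge H G w v f u hu) := keyH e _ hL hmL hkm.symm
    have hme' : c₂ (mEdge H G w v f u hu) = c₂ e' := keyG _ e' hmR hR' (hkm.trans h)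
    exact hem.trans hme'
  · obtain ⟨u, hu, hkm⟩ := matching_surj H G w v f hH hG c₁ hc₁ (c₁ e)
    have hmL : ∃ a : {x : W // x ≠ w}, inl a ∈ (mEdge H G w v f u hu).1 :=
      ⟨_, Sym2.mem_mk_left _ _⟩
    have hmR : ∃ b : {y : V // y ≠ v}, inr b ∈ (mEdge H G w v f u hu).1 :=
      ⟨_, Sym2.mem_mk_right _ _⟩
    have hem : c₂ e = c₂ (mEdge H G w v f u hu) := keyG e _ hR hmR hkm.symm
    have hme' : c₂ (mEdge H G w v f u hu) = c₂ e' := keyH _ e' hmL hL' (hkm.trans h)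
    exact hem.trans hme'
  · exact keyG e e' hR hR' h

open Classical in
noncomputable def wcol (cH' : H.edgeSet → Fin 3) (a : {x : W // x ≠ w}) : Fin 3 :=
  if ha : a.1 ∈ H.neighborSet w then cH' ⟨s(w, a.1), H.mem_edgeSet.2 ha⟩ else 0

noncomputable def pairJ (cH' : H.edgeSet → Fin 3) (cG' : G.edgeSet → Fin 3)
    (τ : Fin 3 → Fin 3) :
    ({x : W // x ≠ w} ⊕ {y : V // y ≠ v}) → ({x : W // x ≠ w} ⊕ {y : V // y ≠ v}) → Fin 3
  | inl a, inl b => ext3 H cH' s(a.1, b.1)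
  | inr a, inr b => τ (ext3 G cG' s(a.1, b.1))
  | inl a, inr _ => wcol H w cH' a
  | inr _, inl a => wcol H w cH' a

lemma pairJ_comm (cH' : H.edgeSet → Fin 3) (cG' : G.edgeSet → Fin 3) (τ : Fin 3 → Fin 3) :
    ∀ p q, pairJ H G w v cH' cG' τ p q = pairJ H G w v cH' cG' τ q p := by
  rintro (a | a) (b | b)
  · show ext3 H cH' s(a.1, b.1) = ext3 H cH' s(b.1, a.1)
    rw [Sym2.eq_swap]
  · rfl
  · rfl
  · show τ (ext3 G cG' s(a.1, b.1)) = τ (ext3 G cG' s(b.1, a.1))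
    rw [Sym2.eq_swap]

lemma yjoin_exists (hH : IsCubic H) (hG : IsCubic G)
    (cH' : H.edgeSet → Fin 3) (hcH : IsProper3EdgeColoring H cH')
    (cG' : G.edgeSet → Fin 3) (hcG : IsProper3EdgeColoring G cG') :
    ∃ c : (YJoin H G w v f).edgeSet → Fin 3,
      IsProper3EdgeColoring (YJoin H G w v f) c := by
  classical
  set α : H.neighborSet w → Fin 3 := fun u => cH' ⟨s(w, u.1), H.mem_edgeSet.2 u.2⟩ with hα
  have hαinj : Function.Injective α := by
    intro u₁ u₂ hh
    by_contra hne
    refine hcH _ _ (fun he => hne ?_) ⟨w, by simp, by simp⟩ hh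
    exact Subtype.ext (Sym2.congr_right.1 (Subtype.ext_iff.1 he))
  set β : G.neighborSet v → Fin 3 := fun u => cG' ⟨s(v, u.1), G.mem_edgeSet.2 u.2⟩ with hβ
  have hβinj : Function.Injective β := by
    intro u₁ u₂ hh
    by_contra hne
    refine hcG _ _ (fun he => hne ?_) ⟨v, by simp, by simp⟩ hh
    exact Subtype.ext (Sym2.congr_right.1 (Subtype.ext_iff.1 he))
  have hβsurj := (inj_iff_surj_ncard3 _ (hG v) β).1 hβinj
  set βE : G.neighborSet v ≃ Fin 3 := Equiv.ofBijective β ⟨hβinj, hβsurj⟩ with hβE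
  set τ : Fin 3 → Fin 3 := fun k => α (f.symm (βE.symm k)) with hτ
  have hτinj : Function.Injective τ := fun k₁ k₂ hh =>
    βE.symm.injective (f.symm.injective (hαinj hh))
  have hτβ : ∀ u : H.neighborSet w, τ (β (f u)) = α u := by
    intro u
    show α (f.symm (βE.symm (βE (f u)))) = α u
    rw [Equiv.symm_apply_apply, Equiv.symm_apply_apply]
  refine ⟨fun e => Sym2.lift ⟨pairJ H G w v cH' cG' τ, pairJ_comm H G w v cH' cG' τ⟩ e.1, ?_⟩
  rintro e₁ e₂ hne ⟨z, hz₁, hz₂⟩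
  obtain ⟨p, hp⟩ := Sym2.mem_iff_exists.1 hz₁
  obtain ⟨q, hq⟩ := Sym2.mem_iff_exists.1 hz₂
  have adjp : (YJoin H G w v f).Adj z p := (YJoin H G w v f).mem_edgeSet.1 (hp ▸ e₁.2)
  have adjq : (YJoin H G w v f).Adj z q := (YJoin H G w v f).mem_edgeSet.1 (hq ▸ e₂.2)
  have hpq : p ≠ q := by
    intro hh
    apply hne
    apply Subtype.ext
    rw [hp, hq, hh]
  have he₁ : e₁ = ⟨s(z, p), hp ▸ e₁.2⟩ := Subtype.ext hp
  have he₂ : e₂ = ⟨s(z, q), hq ▸ e₂.2⟩ := Subtype.ext hq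
  rw [he₁, he₂]
  show pairJ H G w v cH' cG' τ z p ≠ pairJ H G w v cH' cG' τ z q
  rcases z with a | b
  · rcases p with b₁ | d₁ <;> rcases q with b₂ | d₂
    · -- two H-edges at a
      have h₁ : H.Adj a.1 b₁.1 := adjp
      have h₂ : H.Adj a.1 b₂.1 := adjq
      show ext3 H cH' s(a.1, b₁.1) ≠ ext3 H cH' s(a.1, b₂.1)
      rw [ext3_eq H cH' (H.mem_edgeSet.2 h₁), ext3_eq H cH' (H.mem_edgeSet.2 h₂)]
      apply hcH
      · intro he
        apply hpq
        have h3 := Sym2.congr_right.1 (Subtype.ext_iff.1 he)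
        exact congrArg inl (Subtype.ext h3)
      · exact ⟨a.1, Sym2.mem_mk_left _ _, Sym2.mem_mk_left _ _⟩
    · -- H-edge at a vs matching edge at a
      have h₁ : H.Adj a.1 b₁.1 := adjp
      obtain ⟨ha, hfd⟩ := adjq
      show ext3 H cH' s(a.1, b₁.1) ≠ wcol H w cH' a
      rw [ext3_eq H cH' (H.mem_edgeSet.2 h₁), wcol, dif_pos ha]
      apply hcH
      · intro he
        rcases Sym2.eq_iff.1 (Subtype.ext_iff.1 he) with ⟨h4, _⟩ | ⟨_, h4⟩
        · exact a.2 h4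
        · exact b₁.2 h4
      · exact ⟨a.1, Sym2.mem_mk_left _ _, Sym2.mem_mk_right _ _⟩
    · -- matching edge at a vs H-edge at a
      have h₂ : H.Adj a.1 b₂.1 := adjq
      obtain ⟨ha, hfd⟩ := adjp
      show wcol H w cH' a ≠ ext3 H cH' s(a.1, b₂.1)
      rw [ext3_eq H cH' (H.mem_edgeSet.2 h₂), wcol, dif_pos ha]
      apply hcH
      · intro he
        rcases Sym2.eq_iff.1 (Subtype.ext_iff.1 he) with ⟨h4, _⟩ | ⟨h4, _⟩
        · exact a.2 h4.symm
        · exact b₂.2 h4.symm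
      · exact ⟨a.1, Sym2.mem_mk_right _ _, Sym2.mem_mk_left _ _⟩
    · -- two matching edges at a : impossible
      exfalso
      obtain ⟨h₁, hf₁⟩ := adjp
      obtain ⟨h₂, hf₂⟩ := adjq
      apply hpq
      apply congrArg inr
      apply Subtype.ext
      rw [← hf₁, ← hf₂]
  · rcases p with a₁ | d₁ <;> rcases q with a₂ | d₂
    · -- two matching edges at b : impossible
      exfalso
      obtain ⟨h₁, hf₁⟩ := adjp
      obtain ⟨h₂, hf₂⟩ := adjq
      apply hpq
      apply congrArg inl
      have h3 : (⟨a₁.1, h₁⟩ : H.neighborSet w) = ⟨a₂.1, h₂⟩ :=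
        f.injective (Subtype.ext (hf₁.trans hf₂.symm))
      have h4 : a₁.1 = a₂.1 := congrArg (Subtype.val : H.neighborSet w → W) h3
      exact Subtype.ext h4
    · -- matching edge at b vs G-edge at b
      obtain ⟨ha, hf⟩ := adjp
      have h₂ : G.Adj b.1 d₂.1 := adjq
      have hb : s(v, b.1) ∈ G.edgeSet := by
        rw [← hf]; exact G.mem_edgeSet.2 (f ⟨a₁.1, ha⟩).2
      have h1 : β (f ⟨a₁.1, ha⟩) = cG' ⟨s(v, b.1), hb⟩ := by
        apply congrArg cG'
        apply Subtype.ext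
        show s(v, (f ⟨a₁.1, ha⟩ : V)) = s(v, b.1)
        rw [hf]
      have h2 : wcol H w cH' a₁ = τ (cG' ⟨s(v, b.1), hb⟩) := by
        rw [wcol, dif_pos ha, ← h1, hτβ ⟨a₁.1, ha⟩]
      show wcol H w cH' a₁ ≠ τ (ext3 G cG' s(b.1, d₂.1))
      rw [h2, ext3_eq G cG' (G.mem_edgeSet.2 h₂)]
      intro hh
      have h3 := hτinj hh
      refine hcG _ _ ?_ ⟨b.1, Sym2.mem_mk_right _ _, Sym2.mem_mk_left _ _⟩ h3
      intro he
      rcases Sym2.eq_iff.1 (Subtype.ext_iff.1 he) with ⟨h4, _⟩ | ⟨h4, _⟩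
      · exact b.2 h4.symm
      · exact d₂.2 h4.symm
    · -- G-edge at b vs matching edge at b
      obtain ⟨ha, hf⟩ := adjq
      have h₁ : G.Adj b.1 d₁.1 := adjp
      have hb : s(v, b.1) ∈ G.edgeSet := by
        rw [← hf]; exact G.mem_edgeSet.2 (f ⟨a₂.1, ha⟩).2
      have h1 : β (f ⟨a₂.1, ha⟩) = cG' ⟨s(v, b.1), hb⟩ := by
        apply congrArg cG'
        apply Subtype.ext
        show s(v, (f ⟨a₂.1, ha⟩ : V)) = s(v, b.1)
        rw [hf]
      have h2 : wcol H w cH' a₂ = τ (cG' ⟨s(v, b.1), hb⟩) := by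
        rw [wcol, dif_pos ha, ← h1, hτβ ⟨a₂.1, ha⟩]
      show τ (ext3 G cG' s(b.1, d₁.1)) ≠ wcol H w cH' a₂
      rw [h2, ext3_eq G cG' (G.mem_edgeSet.2 h₁)]
      intro hh
      have h3 := hτinj hh
      refine hcG _ _ ?_ ⟨b.1, Sym2.mem_mk_left _ _, Sym2.mem_mk_right _ _⟩ h3
      intro he
      rcases Sym2.eq_iff.1 (Subtype.ext_iff.1 he) with ⟨h4, _⟩ | ⟨_, h4⟩
      · exact b.2 h4
      · exact d₁.2 h4
    · -- two G-edges at b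
      have h₁ : G.Adj b.1 d₁.1 := adjp
      have h₂ : G.Adj b.1 d₂.1 := adjq
      show τ (ext3 G cG' s(b.1, d₁.1)) ≠ τ (ext3 G cG' s(b.1, d₂.1))
      rw [ext3_eq G cG' (G.mem_edgeSet.2 h₁), ext3_eq G cG' (G.mem_edgeSet.2 h₂)]
      intro hh
      have h3 := hτinj hh
      refine hcG _ _ ?_ ⟨b.1, Sym2.mem_mk_left _ _, Sym2.mem_mk_left _ _⟩ h3
      intro he
      apply hpq
      have h4 := Sym2.congr_right.1 (Subtype.ext_iff.1 he)
      exact congrArg inr (Subtype.ext h4)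

end YJoinLemmas

/-- if `G` is a finite simple cubic uniquely 3-edge colorable graph, then
every member of the family `G^Y` is uniquely 3-edge colorable. -/
theorem yfamily_uniquely_three_edge_colorable {V : Type} [Fintype V]
    (G : SimpleGraph V) (hcubic : IsCubic G) (huniq : Uniquely3EdgeColorable G) :
    ∀ (W : Type) (H : SimpleGraph W), YFamily G W H → Uniquely3EdgeColorable H := by
  have main : ∀ (W : Type) (H : SimpleGraph W), YFamily G W H →
      IsCubic H ∧ Uniquely3EdgeColorable H := by
    intro W H hfam
    induction hfam with
    | base => exact ⟨hcubic, huniq⟩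
    | join H' hH' w v f ih =>
      obtain ⟨ihc, ihu⟩ := ih
      refine ⟨yjoin_isCubic H' G w v f ihc hcubic, ?_, ?_⟩
      · obtain ⟨cH', hcH⟩ := ihu.1
        obtain ⟨cG', hcG⟩ := huniq.1
        exact yjoin_exists H' G w v f ihc hcubic cH' hcH cG' hcG
      · intro c₁ c₂ hc₁ hc₂ e e'
        constructor
        · exact yjoin_unique H' G w v f ihc hcubic ihu huniq c₁ c₂ hc₁ hc₂ e e'
        · exact yjoin_unique H' G w v f ihc hcubic ihu huniq c₂ c₁ hc₂ hc₁ e e'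
  intro W H hfam
  exact (main W H hfam).2
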